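/- arXiv:1912.11618 — 7 statements merged into one kernel-verified Lean document; each statement's English description precedes it below -/
import Mathlib

section
/- If A is an n×n irreducible 0-1 matrix with spectral radius 1, then A is permutation similar to the n×n basic circulant matrix C_n (the adjacency matrix of the directed n-cycle). -/
open Matrix

/-- The spectral radius of a complex matrix: the supremum of moduli of its eigenvalues. -/
noncomputable def specRad {n : ℕ} (M : Matrix (Fin n) (Fin n) ℂ) : ℝ :=
  sSup {x : ℝ | ∃ μ ∈ spectrum ℂ M, x = ‖μ‖}

/-- A 0-1 matrix. -/
def IsZeroOneR {n : ℕ} (A : Matrix (Fin n) (Fin n) ℝ) : Prop :=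
  ∀ i j, A i j = 0 ∨ A i j = 1

/-- Irreducibility of a nonnegative matrix: its digraph is strongly connected;
a 1×1 matrix is regarded as irreducible. -/
def Irred {n : ℕ} (A : Matrix (Fin n) (Fin n) ℝ) : Prop :=
  n = 1 ∨ ∀ i j : Fin n, ∃ m : ℕ, 1 ≤ m ∧ 0 < (A ^ m) i j

/-- The n×n basic circulant matrix: entry (i,j) is 1 iff j ≡ i+1 (mod n). -/
def basicCirculant (n : ℕ) : Matrix (Fin n) (Fin n) ℝ :=
  Matrix.of fun i j => if (j : ℕ) = ((i : ℕ) + 1) % n then 1 else 0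

/-!
Write `A` as the image of a natural matrix `B`. If row `i` of `B` had two nonzero entries, strong
connectivity would close them into two distinct closed walks of a common length `N` at `i`, so
`(B ^ N) i i ≥ 2`, hence `(B ^ (N * k)) i i ≥ 2 ^ k`, and Gelfand's formula gives
`ρ(B) ^ N = ρ(B ^ N) ≥ 2`. Applied to `Bᵀ` the same holds for columns, so `B` is the matrix of a
permutation `π`; strong connectivity makes `π` a single `n`-cycle, hence conjugate to
`finRotate n`, whose matrix is the basic circulant.
-/

open Finset Filter
open scoped NNReal ENNReal

namespace spectrum

theorem le_spectralRadius_of_pow_le_nnnorm_pow {A : Type*} [NormedRing A] [NormedAlgebra ℂ A]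
    [CompleteSpace A] {a : A} {r : ℝ≥0} (h : ∀ k, r ^ k ≤ ‖a ^ k‖₊) :
    (r : ℝ≥0∞) ≤ spectralRadius ℂ a := by
  refine ge_of_tendsto (pow_nnnorm_pow_one_div_tendsto_nhds_spectralRadius a) ?_
  filter_upwards [eventually_ne_atTop 0] with k hk
  calc (r : ℝ≥0∞) = ((r : ℝ≥0∞) ^ k) ^ (1 / k : ℝ) := by
        rw [one_div, ENNReal.pow_rpow_inv_natCast hk]
    _ ≤ _ := ENNReal.rpow_le_rpow (mod_cast h k) (by positivity)

theorem spectralRadius_pow_le_one {A : Type*} [Ring A] [Algebra ℂ A] {a : A}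
    (ha : ∀ μ ∈ spectrum ℂ a, ‖μ‖ ≤ 1) {N : ℕ} (hN : 0 < N) :
    spectralRadius ℂ (a ^ N) ≤ 1 := by
  refine iSup₂_le fun μ hμ => ?_
  rw [map_pow_of_pos a hN] at hμ
  obtain ⟨ν, hν, rfl⟩ := hμ
  rw [nnnorm_pow, ENNReal.coe_pow]
  exact pow_le_one₀ zero_le (mod_cast ha ν hν)

end spectrum

namespace Matrix

variable {ι : Type*} [Fintype ι]

theorem apply_mul_apply_le_mul_apply (B C : Matrix ι ι ℕ) (i j k : ι) :
    B i j * C j k ≤ (B * C) i k :=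
  single_le_sum (f := fun j => B i j * C j k) (fun _ _ => Nat.zero_le _) (mem_univ j)

variable [DecidableEq ι]

section Semiring

variable {R : Type*} [Semiring R]

theorem perm_pow_apply_eq_of_pow_apply_ne_zero {B : Matrix ι ι R} {π : Equiv.Perm ι}
    (hπ : ∀ i j, B i j ≠ 0 → π i = j) (m : ℕ) {i j : ι} (h : (B ^ m) i j ≠ 0) :
    (π ^ m) i = j := by
  induction m generalizing j with
  | zero =>
    rw [pow_zero, Equiv.Perm.one_apply]
    by_contra hij
    exact h (by rw [pow_zero, one_apply_ne hij])
  | succ m ih =>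
    rw [pow_succ, mul_apply] at h
    obtain ⟨k, -, hk⟩ := exists_ne_zero_of_sum_ne_zero h
    rw [pow_succ', Equiv.Perm.mul_apply, ih (left_ne_zero_of_mul hk)]
    exact hπ k j (right_ne_zero_of_mul hk)

theorem map_natCast_pow (B : Matrix ι ι ℕ) (m : ℕ) :
    B.map (Nat.cast : ℕ → R) ^ m = (B ^ m).map Nat.cast :=
  (Matrix.map_pow B (Nat.castRingHom R) m).symm

end Semiring

variable (B : Matrix ι ι ℕ)

theorem pow_add_apply_ne_zero {a b : ℕ} {i j k : ι} (h₁ : (B ^ a) i j ≠ 0)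
    (h₂ : (B ^ b) j k ≠ 0) : (B ^ (a + b)) i k ≠ 0 := by
  rw [pow_add]
  exact (Nat.pos_of_ne_zero (mul_ne_zero h₁ h₂)).trans_le
    (apply_mul_apply_le_mul_apply _ _ i j k) |>.ne'

theorem apply_pow_le_pow_apply (i : ι) (k : ℕ) : B i i ^ k ≤ (B ^ k) i i := by
  induction k with
  | zero => simp
  | succ k ih =>
    rw [pow_succ, pow_succ]
    exact (Nat.mul_le_mul_right _ ih).trans (apply_mul_apply_le_mul_apply _ _ i i i)

theorem exists_two_le_pow_apply_self (hreach : ∀ i j, ∃ m, (B ^ m) i j ≠ 0) {i j₁ j₂ : ι}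
    (h₁ : B i j₁ ≠ 0) (h₂ : B i j₂ ≠ 0) (hne : j₁ ≠ j₂) :
    ∃ N, 0 < N ∧ 2 ≤ (B ^ N) i i := by
  obtain ⟨p, hp⟩ := hreach j₁ i
  obtain ⟨q, hq⟩ := hreach j₂ i
  have h₁' : (B ^ 1) i j₁ ≠ 0 := by rwa [pow_one]
  have h₂' : (B ^ 1) i j₂ ≠ 0 := by rwa [pow_one]
  have hw₁ : (B ^ (p + (1 + q))) j₁ i ≠ 0 :=
    pow_add_apply_ne_zero B hp (pow_add_apply_ne_zero B h₂' hq)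
  have hw₂ : (B ^ (p + (1 + q))) j₂ i ≠ 0 := by
    rw [show p + (1 + q) = q + (1 + p) by omega]
    exact pow_add_apply_ne_zero B hq (pow_add_apply_ne_zero B h₁' hp)
  refine ⟨1 + (p + (1 + q)), by omega, ?_⟩
  rw [pow_add, pow_one, mul_apply]
  calc 2 = 1 + 1 := rfl
    _ ≤ B i j₁ * (B ^ (p + (1 + q))) j₁ i + B i j₂ * (B ^ (p + (1 + q))) j₂ i :=
      add_le_add (Nat.one_le_iff_ne_zero.2 (mul_ne_zero h₁ hw₁))
        (Nat.one_le_iff_ne_zero.2 (mul_ne_zero h₂ hw₂))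
    _ ≤ _ := add_le_sum (f := fun k => B i k * (B ^ (p + (1 + q))) k i)
      (fun _ _ => Nat.zero_le _) (mem_univ _) (mem_univ _) hne

variable {B}

theorem eq_of_apply_ne_zero_right (hreach : ∀ i j, ∃ m, 0 < m ∧ (B ^ m) i j ≠ 0)
    (hdiag : ∀ N, 0 < N → ∀ i, (B ^ N) i i ≤ 1) {i j₁ j₂ : ι} (h₁ : B i j₁ ≠ 0)
    (h₂ : B i j₂ ≠ 0) : j₁ = j₂ := by
  by_contra hne
  obtain ⟨N, hN, h2⟩ := exists_two_le_pow_apply_self B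
    (fun i j => (hreach i j).imp fun _ => And.right) h₁ h₂ hne
  exact absurd (hdiag N hN i) (by omega)

theorem eq_of_apply_ne_zero_left (hreach : ∀ i j, ∃ m, 0 < m ∧ (B ^ m) i j ≠ 0)
    (hdiag : ∀ N, 0 < N → ∀ i, (B ^ N) i i ≤ 1) {i₁ i₂ j : ι} (h₁ : B i₁ j ≠ 0)
    (h₂ : B i₂ j ≠ 0) : i₁ = i₂ :=
  eq_of_apply_ne_zero_right (B := Bᵀ)
    (fun i j => by simpa [← transpose_pow] using hreach j i)
    (fun N hN i => by simpa [← transpose_pow] using hdiag N hN i) h₁ h₂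

theorem exists_apply_ne_zero (hreach : ∀ i j, ∃ m, 0 < m ∧ (B ^ m) i j ≠ 0) (i : ι) :
    ∃ j, B i j ≠ 0 := by
  obtain ⟨m, hm, h⟩ := hreach i i
  obtain ⟨k, rfl⟩ := Nat.exists_eq_add_of_lt hm
  rw [zero_add, pow_succ', mul_apply] at h
  obtain ⟨j, -, hj⟩ := exists_ne_zero_of_sum_ne_zero h
  exact ⟨j, left_ne_zero_of_mul hj⟩

theorem exists_perm_forall_sameCycle (hreach : ∀ i j, ∃ m, 0 < m ∧ (B ^ m) i j ≠ 0)
    (hdiag : ∀ N, 0 < N → ∀ i, (B ^ N) i i ≤ 1) :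
    ∃ π : Equiv.Perm ι, (∀ i j, B i j ≠ 0 ↔ π i = j) ∧ ∀ i j, π.SameCycle i j := by
  choose f hf using exists_apply_ne_zero hreach
  have hinj : Function.Injective f := fun i₁ i₂ h =>
    eq_of_apply_ne_zero_left hreach hdiag (hf i₁) (h ▸ hf i₂)
  set π := Equiv.ofBijective f (Finite.injective_iff_bijective.1 hinj)
  have hπ : ∀ i j, B i j ≠ 0 ↔ π i = j := fun i j =>
    ⟨fun h => eq_of_apply_ne_zero_right hreach hdiag (hf i) h, fun h => h ▸ hf i⟩
  refine ⟨π, hπ, fun i j => ?_⟩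
  obtain ⟨m, -, hm⟩ := hreach i j
  exact ⟨m, by simpa using perm_pow_apply_eq_of_pow_apply_ne_zero (fun i j => (hπ i j).1) m hm⟩

section LinftyOp

attribute [local instance] Matrix.linftyOpNormedRing Matrix.linftyOpNormedAlgebra

theorem nnnorm_apply_le_linfty_opNNNorm (M : Matrix ι ι ℂ) (i j : ι) : ‖M i j‖₊ ≤ ‖M‖₊ := by
  rw [linfty_opNNNorm_def]
  exact (single_le_sum (f := fun k => ‖M i k‖₊) (fun _ _ => zero_le) (mem_univ j)).trans
    (le_sup (f := fun i => ∑ j, ‖M i j‖₊) (mem_univ i))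

theorem pow_apply_self_le_one_of_norm_le_one {B : Matrix ι ι ℕ}
    (hB : ∀ μ ∈ spectrum ℂ (B.map (Nat.cast : ℕ → ℂ)), ‖μ‖ ≤ 1) {N : ℕ} (hN : 0 < N) (i : ι) :
    (B ^ N) i i ≤ 1 := by
  set M := B.map (Nat.cast : ℕ → ℂ)
  have hgrowth : ∀ k, (((B ^ N) i i : ℕ) : ℝ≥0) ^ k ≤ ‖(M ^ N) ^ k‖₊ := fun k => by
    have hentry : ((M ^ N) ^ k) i i = (((B ^ N) ^ k) i i : ℂ) := by
      rw [← pow_mul, ← pow_mul, map_natCast_pow, map_apply]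
    calc (((B ^ N) i i : ℕ) : ℝ≥0) ^ k ≤ (((B ^ N) ^ k) i i : ℕ) :=
          mod_cast apply_pow_le_pow_apply (B ^ N) i k
      _ = ‖((M ^ N) ^ k) i i‖₊ := by rw [hentry, Complex.nnnorm_natCast]
      _ ≤ _ := nnnorm_apply_le_linfty_opNNNorm _ i i
  exact_mod_cast (spectrum.le_spectralRadius_of_pow_le_nnnorm_pow hgrowth).trans
    (spectrum.spectralRadius_pow_le_one hB hN)

end LinftyOp

end Matrix

theorem norm_le_specRad {n : ℕ} (M : Matrix (Fin n) (Fin n) ℂ) {μ : ℂ} (hμ : μ ∈ spectrum ℂ M) :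
    ‖μ‖ ≤ specRad M :=
  le_csSup ((M.finite_spectrum.image (‖·‖)).bddAbove.mono
    (by rintro _ ⟨ν, hν, rfl⟩; exact ⟨ν, hν, rfl⟩)) ⟨μ, hμ, rfl⟩

theorem specRad_zero (n : ℕ) : specRad (0 : Matrix (Fin n) (Fin n) ℂ) = 0 := by
  cases n with
  | zero => simp [specRad, spectrum]
  | succ n => simp [specRad, spectrum.zero_eq]

theorem Equiv.Perm.isConj_finRotate_of_forall_sameCycle {n : ℕ} {π : Equiv.Perm (Fin n)}
    (h : ∀ i j, π.SameCycle i j) : IsConj π (finRotate n) := by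
  rcases lt_or_ge n 2 with hn | hn
  · have : Subsingleton (Fin n) := Fin.subsingleton_iff_le_one.2 (by omega)
    rw [Subsingleton.elim π (finRotate n)]
  · have : Nontrivial (Fin n) := Fin.nontrivial_iff_two_le.2 hn
    have hfix : ∀ i, π i ≠ i := fun i hi => by
      obtain ⟨j, hj⟩ := exists_ne i
      exact hj ((h i j).eq_of_left hi).symm
    have hcycle : π.IsCycle := ⟨⟨0, by omega⟩, hfix _, fun y _ => h _ y⟩
    refine hcycle.isConj (isCycle_finRotate_of_le hn) ?_
    rw [support_finRotate_of_le hn, eq_univ_of_forall fun i => mem_support.2 (hfix i)]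

theorem basicCirculant_apply {n : ℕ} (i j : Fin n) :
    basicCirculant n i j = if finRotate n i = j then 1 else 0 := by
  obtain ⟨n, rfl⟩ : ∃ m, n = m + 1 := ⟨n - 1, by have := i.2; omega⟩
  simp [basicCirculant, Fin.ext_iff, Fin.val_add, eq_comm]

theorem IsZeroOneR.exists_map_natCast {n : ℕ} {A : Matrix (Fin n) (Fin n) ℝ}
    (h : IsZeroOneR A) : ∃ B : Matrix (Fin n) (Fin n) ℕ, B.map Nat.cast = A :=
  ⟨A.map (⌊·⌋₊), by ext i j; rcases h i j with h | h <;> simp [h]⟩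

theorem IsZeroOneR.apply_eq_ite {n : ℕ} {A : Matrix (Fin n) (Fin n) ℝ} (h : IsZeroOneR A)
    {π : Equiv.Perm (Fin n)} (hπ : ∀ i j, A i j ≠ 0 ↔ π i = j) (i j : Fin n) :
    A i j = if π i = j then 1 else 0 := by
  split_ifs with hij
  · exact (h i j).resolve_left ((hπ i j).2 hij)
  · exact not_ne_iff.1 (mt (hπ i j).1 hij)

theorem Irred.exists_pow_apply_ne_zero {n : ℕ} {B : Matrix (Fin n) (Fin n) ℕ}
    (hirr : Irred (B.map (Nat.cast : ℕ → ℝ))) (hB : B ≠ 0) (i j : Fin n) :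
    ∃ m, 0 < m ∧ (B ^ m) i j ≠ 0 := by
  rcases hirr with rfl | hirr
  · obtain ⟨k, l, hkl⟩ : ∃ k l, B k l ≠ 0 := by
      by_contra! h
      exact hB (ext h)
    exact ⟨1, one_pos, by rwa [pow_one, Subsingleton.elim i k, Subsingleton.elim j l]⟩
  · obtain ⟨m, hm, hpos⟩ := hirr i j
    rw [map_natCast_pow, map_apply] at hpos
    exact ⟨m, hm, mod_cast hpos.ne'⟩

theorem stmt0_general {n : ℕ} (A : Matrix (Fin n) (Fin n) ℝ)
    (h01 : IsZeroOneR A) (hirr : Irred A)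
    (hρ : specRad (A.map (Complex.ofReal)) = 1) :
    ∃ σ : Equiv.Perm (Fin n), ∀ i j, A i j = basicCirculant n (σ i) (σ j) := by
  obtain ⟨B, rfl⟩ := h01.exists_map_natCast
  have hρB : specRad (B.map (Nat.cast : ℕ → ℂ)) = 1 := by
    simpa [Matrix.map_map, Function.comp_def] using hρ
  have hB : B ≠ 0 := by
    rintro rfl
    simp [specRad_zero] at hρB
  obtain ⟨π, hπ, hcycle⟩ := exists_perm_forall_sameCycle (hirr.exists_pow_apply_ne_zero hB)
    fun N hN => pow_apply_self_le_one_of_norm_le_one (fun μ hμ => hρB ▸ norm_le_specRad _ hμ) hN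
  obtain ⟨σ, hσ⟩ := isConj_iff.1 (Equiv.Perm.isConj_finRotate_of_forall_sameCycle hcycle)
  refine ⟨σ, fun i j => ?_⟩
  rw [h01.apply_eq_ite (by simpa using hπ), basicCirculant_apply, ← hσ]
  simp

theorem stmt0 {n : ℕ} (hn : 1 ≤ n) (A : Matrix (Fin n) (Fin n) ℝ)
    (h01 : IsZeroOneR A) (hirr : Irred A)
    (hρ : specRad (A.map (Complex.ofReal)) = 1) :
    ∃ σ : Equiv.Perm (Fin n), ∀ i j, A i j = basicCirculant n (σ i) (σ j) :=
  stmt0_general A h01 hirr hρ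
end

section
/- Let k ≥ 2 and let P be a permutation matrix of order m with P^k = P (equivalently P^{k−1} = I). For any 0-1 matrices X (r×m) and Y (m×s) such that X·Pᵀ·Y is a 0-1 matrix, the block matrix H = [[0, X, XPᵀY],[0, P, Y],[0, 0, 0]] (with square zero diagonal blocks of sizes r and s) satisfies H^k = H. -/
open Matrix

/-- A 0-1 matrix over the integers. -/
def IsZeroOne {α β : Type*} (A : Matrix α β ℤ) : Prop :=
  ∀ i j, A i j = 0 ∨ A i j = 1

/-- A permutation matrix. -/
def IsPermMatrix {α : Type*} [DecidableEq α] (P : Matrix α α ℤ) : Prop :=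
  ∃ σ : Equiv.Perm α, ∀ i j, P i j = if j = σ i then 1 else 0

/-- The block matrix [[0, X, Z],[0, P, Y],[0, 0, 0]] with square zero diagonal blocks. -/
def blockH {α β γ : Type*} (X : Matrix α β ℤ) (P : Matrix β β ℤ)
    (Y : Matrix β γ ℤ) (Z : Matrix α γ ℤ) : Matrix (α ⊕ β ⊕ γ) (α ⊕ β ⊕ γ) ℤ :=
  Matrix.fromBlocks 0 (Matrix.fromCols X Z) 0 (Matrix.fromBlocks P Y 0 0)

/-!
Write `D = [[P, Y], [0, 0]]`, so that `H = [[0, [X, Z]], [0, D]]`. Powers of such block-triangular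
matrices are explicit: `D ^ (n + 1) = [[P ^ (n + 1), P ^ n Y], [0, 0]]` and
`H ^ (n + 1) = [[0, [X, Z] D ^ n], [0, D ^ (n + 1)]]`. For `k = n + 2`, `P Pᵀ = 1` turns
`P ^ k = P` into `P ^ (n + 1) = 1` and `P ^ n = Pᵀ`, so `D ^ k = D` and
`[X, Z] D ^ (k - 1) = [X, X Pᵀ Y]`, which is `[X, Z]` exactly when `Z = X Pᵀ Y`.
-/

theorem IsPermMatrix.mul_transpose_self {α : Type*} [Fintype α] [DecidableEq α]
    {P : Matrix α α ℤ} (hP : IsPermMatrix P) : P * Pᵀ = 1 := by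
  obtain ⟨σ, hσ⟩ := hP
  ext i j
  simp only [mul_apply, transpose_apply, hσ, one_apply, ite_mul, one_mul, zero_mul]
  rw [Finset.sum_ite_eq' Finset.univ (σ i)]
  simp [σ.injective.eq_iff]

section BlockPowers

variable {R n o p : Type*} [Semiring R] [Fintype n] [Fintype o] [DecidableEq n] [DecidableEq o]

theorem Matrix.fromBlocks_zero_zero_pow_succ (A : Matrix n n R) (B : Matrix n o R) (k : ℕ) :
    fromBlocks A B (0 : Matrix o n R) (0 : Matrix o o R) ^ (k + 1) =
      fromBlocks (A ^ (k + 1)) (A ^ k * B) 0 0 := by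
  induction k with
  | zero => simp
  | succ k ih =>
    rw [pow_succ, ih, fromBlocks_multiply]
    simp [pow_succ]

theorem Matrix.fromBlocks_zero_zero_left_pow_succ [Fintype p] [DecidableEq p]
    (C : Matrix p o R) (D : Matrix o o R) (k : ℕ) :
    fromBlocks (0 : Matrix p p R) C (0 : Matrix o p R) D ^ (k + 1) =
      fromBlocks 0 (C * D ^ k) 0 (D ^ (k + 1)) := by
  induction k with
  | zero => simp
  | succ k ih =>
    rw [pow_succ, ih, fromBlocks_multiply]
    simp [pow_succ, Matrix.mul_assoc]

end BlockPowers

theorem pow_succ_eq_one_of_mul_eq_one_of_pow_add_two_eq_self {M : Type*} [Monoid M] {a b : M}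
    (hab : a * b = 1) {n : ℕ} (h : a ^ (n + 2) = a) : a ^ (n + 1) = 1 := by
  calc a ^ (n + 1) = a ^ (n + 1) * (a * b) := by rw [hab, mul_one]
    _ = a ^ (n + 2) * b := by rw [← mul_assoc, ← pow_succ]
    _ = 1 := by rw [h, hab]

theorem stmt6_general {r m s k : ℕ} (hk : 2 ≤ k)
    (P : Matrix (Fin m) (Fin m) ℤ) (hP : IsPermMatrix P) (hPk : P ^ k = P)
    (X : Matrix (Fin r) (Fin m) ℤ) (Y : Matrix (Fin m) (Fin s) ℤ) :
    (blockH X P Y (X * Pᵀ * Y)) ^ k = blockH X P Y (X * Pᵀ * Y) := by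
  obtain ⟨n, rfl⟩ : ∃ n, k = n + 2 := ⟨k - 2, by omega⟩
  have hPPt : P * Pᵀ = 1 := hP.mul_transpose_self
  have hP1 : P ^ (n + 1) = 1 :=
    pow_succ_eq_one_of_mul_eq_one_of_pow_add_two_eq_self hPPt hPk
  have hPn : P ^ n = Pᵀ := left_inv_eq_right_inv (by rw [← pow_succ, hP1]) hPPt
  rw [blockH, fromBlocks_zero_zero_left_pow_succ, fromBlocks_zero_zero_pow_succ,
    fromBlocks_zero_zero_pow_succ, hP1, hPn, hPk]
  simp [fromCols_mul_fromBlocks, Matrix.mul_assoc]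

theorem stmt6 {r m s k : ℕ} (hk : 2 ≤ k)
    (P : Matrix (Fin m) (Fin m) ℤ) (hP : IsPermMatrix P) (hPk : P ^ k = P)
    (X : Matrix (Fin r) (Fin m) ℤ) (Y : Matrix (Fin m) (Fin s) ℤ)
    (hX : IsZeroOne X) (hY : IsZeroOne Y) (hXPY : IsZeroOne (X * Pᵀ * Y)) :
    (blockH X P Y (X * Pᵀ * Y)) ^ k = blockH X P Y (X * Pᵀ * Y) :=
  stmt6_general hk P hP hPk X Y
end

section
/- A square 0-1 matrix A satisfies A^k = A (k ≥ 2) if and only if A = 0 or A is permutation similar to a block matrix [[0, X, XPᵀY],[0, P, Y],[0, 0, 0]], where the diagonal zero blocks are square (possibly of size 0), P is a direct sum of basic circulant matrices C_{n_1} ⊕ ⋯ ⊕ C_{n_r} with each n_i dividing k−1, and X, Y are 0-1 matrices such that XPᵀY is also a 0-1 matrix. -/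
open Matrix

/-- The m×m basic circulant matrix: entry (i,j) is 1 iff j ≡ i+1 (mod m). -/
def circ (m : ℕ) : Matrix (Fin m) (Fin m) ℤ :=
  Matrix.of fun i j => if (j : ℕ) = ((i : ℕ) + 1) % m then 1 else 0

/-!
Write `k = m + 2`. Then `B = A ^ (m + 1)` is idempotent with `A * B = B * A = A`, and `B x x > 0`
exactly when the vertex `x` of the digraph of `A` lies on a closed walk. Since `A` is a 0-1 matrix
and `A = A * B = B * A`, comparing walk counts shows that the middle vertex of every path of
length two lies on a closed walk, and that each such vertex has exactly one out-neighbour and one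
in-neighbour among them. So `A` restricted to these vertices is the matrix of a permutation `σ`
with `σ ^ (m + 1) = 1`, and the cycles of `σ` give the circulant blocks. Every other vertex has
a zero column (a source) or a zero row (a sink), which gives the block shape
`H = [[0, X, Z], [0, P, Y], [0, 0, 0]]`, and for such matrices `H ^ (m + 2) = H` says exactly
`Z = X P ^ m Y = X Pᵀ Y`.
-/

open Equiv

section Circulant

lemma val_finRotate {m : ℕ} (u : Fin m) : (finRotate m u : ℕ) = (u + 1) % m := by
  simp [finRotate_apply, Fin.val_add]

lemma val_finRotate_pow {m : ℕ} (j : ℕ) (u : Fin m) :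
    ((finRotate m ^ j) u : ℕ) = (u + j) % m := by
  induction j with
  | zero => simp [Nat.mod_eq_of_lt u.isLt]
  | succ j ih => rw [pow_succ', Perm.mul_apply, val_finRotate, ih, Nat.mod_add_mod, add_assoc]

lemma finRotate_pow_self (m : ℕ) : finRotate m ^ m = 1 :=
  Perm.ext fun u => Fin.ext <| by simp [val_finRotate_pow, Nat.mod_eq_of_lt u.isLt]

lemma sigmaCongrRight_finRotate_pow_eq_one {t q : ℕ} {ns : Fin t → ℕ} (hns : ∀ i, ns i ∣ q) :
    (Perm.sigmaCongrRight fun i => finRotate (ns i)) ^ q = 1 := by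
  have : (fun i => finRotate (ns i)) ^ q = 1 := funext fun i => by
    obtain ⟨c, hc⟩ := hns i
    simp [hc, pow_mul, finRotate_pow_self]
  rw [← Perm.sigmaCongrRightHom_apply, ← map_pow, this, map_one]

lemma Matrix.blockDiagonal'_permMatrix {ι R : Type*} [DecidableEq ι] [Zero R] [One R]
    {κ : ι → Type*} [∀ i, DecidableEq (κ i)] (σ : ∀ i, Perm (κ i)) :
    blockDiagonal' (fun i => (σ i).permMatrix R) = (Perm.sigmaCongrRight σ).permMatrix R := by
  ext ⟨i, u⟩ ⟨j, v⟩
  by_cases h : i = j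
  · subst h
    simp [blockDiagonal'_apply_eq, toPEquiv_apply]
  · simp [blockDiagonal'_apply_ne _ _ _ h, toPEquiv_apply, h]

lemma Matrix.permMatrix_pow {ι R : Type*} [DecidableEq ι] [Fintype ι] [Semiring R]
    (σ : Perm ι) (j : ℕ) : (σ ^ j).permMatrix R = σ.permMatrix R ^ j := by
  simpa using map_pow (permMatrixHom (n := ι) (R := R)) σ⁻¹ j

lemma Matrix.transpose_permMatrix_eq_pow {ι R : Type*} [DecidableEq ι] [Fintype ι] [Semiring R]
    {σ : Perm ι} {m : ℕ} (hσ : σ ^ (m + 1) = 1) : (σ.permMatrix R)ᵀ = σ.permMatrix R ^ m := by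
  rw [transpose_permMatrix, ← permMatrix_pow,
    ← eq_inv_of_mul_eq_one_left (by rw [← pow_succ, hσ] : σ ^ m * σ = 1)]

lemma Matrix.permMatrix_permCongr {ι κ R : Type*} [DecidableEq ι] [DecidableEq κ] [Zero R]
    [One R] (e : ι ≃ κ) (σ : Perm ι) :
    (e.permCongr σ).permMatrix R = (σ.permMatrix R).submatrix e.symm e.symm := by
  ext i j
  simp [toPEquiv_apply, Equiv.permCongr_apply, Equiv.eq_symm_apply]

lemma circ_eq_permMatrix (m : ℕ) : circ m = (finRotate m).permMatrix ℤ := by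
  ext i j
  simp [circ, toPEquiv_apply, Fin.ext_iff, Fin.val_add, eq_comm]

lemma blockDiagonal'_circ {t : ℕ} (ns : Fin t → ℕ) :
    blockDiagonal' (fun i => circ (ns i)) =
      (Perm.sigmaCongrRight fun i => finRotate (ns i)).permMatrix ℤ := by
  simp only [circ_eq_permMatrix, blockDiagonal'_permMatrix]

variable {t m : ℕ} {ns : Fin t → ℕ}

lemma blockDiagonal'_circ_pow_succ (hns : ∀ i, ns i ∣ m + 1) :
    (blockDiagonal' fun i => circ (ns i)) ^ (m + 1) = 1 := by
  rw [blockDiagonal'_circ, ← permMatrix_pow, sigmaCongrRight_finRotate_pow_eq_one hns,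
    permMatrix_one]

lemma transpose_blockDiagonal'_circ (hns : ∀ i, ns i ∣ m + 1) :
    (blockDiagonal' fun i => circ (ns i))ᵀ = (blockDiagonal' fun i => circ (ns i)) ^ m := by
  rw [blockDiagonal'_circ]
  exact transpose_permMatrix_eq_pow (sigmaCongrRight_finRotate_pow_eq_one hns)

end Circulant

open Function in
theorem Equiv.Perm.exists_permCongr_eq_sigmaCongrRight_finRotate {α : Type*} [Fintype α]
    (σ : Perm α) : ∃ (t : ℕ) (ns : Fin t → ℕ) (e : α ≃ Σ i, Fin (ns i)),
      (∀ i, ns i ∣ orderOf σ) ∧ e.permCongr σ = Perm.sigmaCongrRight fun i => finRotate (ns i) := by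
  classical
  let Q := Quotient (SameCycle.setoid σ)
  let eQ := Fintype.equivFin Q
  let rep (i : Fin (Fintype.card Q)) : α := (eQ.symm i).out
  have hper : ∀ x, IsPeriodicPt σ (orderOf σ) x := fun x => by
    rw [IsPeriodicPt, IsFixedPt, iterate_eq_pow, pow_orderOf_eq_one, Perm.coe_one, id]
  let ns i := minimalPeriod σ (rep i)
  let G (p : Σ i, Fin (ns i)) : α := σ^[p.2] (rep p.1)
  have hG : ∀ p, SameCycle σ (rep p.1) (G p) := fun p => ⟨p.2, by simp [G, iterate_eq_pow]⟩
  have hinj : Injective G := by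
    rintro ⟨i, u⟩ ⟨j, v⟩ h
    obtain rfl : i = j := eQ.symm.injective <| by
      rw [← Quotient.out_eq (eQ.symm i), ← Quotient.out_eq (eQ.symm j)]
      exact Quotient.sound ((hG ⟨i, u⟩).trans (h ▸ (hG ⟨j, v⟩).symm))
    rw [Fin.ext ((iterate_eq_iterate_iff_of_lt_minimalPeriod u.2 v.2).mp h)]
  have hsurj : Surjective G := fun x => by
    let i := eQ ⟦x⟧
    have hx : SameCycle σ (rep i) x := by
      change SameCycle σ (eQ.symm (eQ ⟦x⟧)).out x
      rw [Equiv.symm_apply_apply]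
      exact Quotient.mk_out (s := SameCycle.setoid σ) x
    obtain ⟨j, hj⟩ := hx.exists_nat_pow_eq
    have hpos : 0 < ns i := (hper _).minimalPeriod_pos (orderOf_pos σ)
    refine ⟨⟨i, j % ns i, Nat.mod_lt _ hpos⟩, ?_⟩
    rw [← hj, ← iterate_eq_pow, ← iterate_mod_minimalPeriod_eq]
  let e := (Equiv.ofBijective G ⟨hinj, hsurj⟩).symm
  refine ⟨_, ns, e, fun i => (hper _).minimalPeriod_dvd, Perm.ext fun p => e.symm.injective ?_⟩
  obtain ⟨i, u⟩ := p
  rw [Equiv.permCongr_apply, Equiv.symm_apply_apply]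
  change σ (G ⟨i, u⟩) = G ⟨i, finRotate (ns i) u⟩
  rw [show G ⟨i, finRotate (ns i) u⟩ = σ^[u + 1] (rep i) by
    simp only [G]; rw [val_finRotate, iterate_mod_minimalPeriod_eq], iterate_succ_apply']

lemma Matrix.submatrix_equiv_pow {m n R : Type*} [Fintype m] [DecidableEq m] [Fintype n]
    [DecidableEq n] [Semiring R] (M : Matrix m m R) (e : n ≃ m) (j : ℕ) :
    M.submatrix e e ^ j = (M ^ j).submatrix e e := by
  simpa using (map_pow (reindexAlgEquiv ℕ R e.symm) M j).symm

def Equiv.sumSubtypeOfDisjoint {ι : Type*} (p q : ι → Prop) [DecidablePred p] [DecidablePred q]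
    (h : ∀ x, q x → ¬p x) : {x // p x} ⊕ {x // q x} ⊕ {x // ¬p x ∧ ¬q x} ≃ ι :=
  (Equiv.sumCongr (Equiv.refl _)
    ((Equiv.sumCongr (subtypeSubtypeEquivSubtype (h _)).symm
      (subtypeSubtypeEquivSubtypeInter (¬p ·) (¬q ·)).symm).trans
      (Equiv.sumCompl fun x : {x // ¬p x} => q x))).trans (Equiv.sumCompl p)

section BlockH
variable {α β γ : Type*}

lemma submatrix_eq_blockH {κ : Type*} (M : Matrix κ κ ℤ) (f : α ⊕ β ⊕ γ → κ)
    (hcol : ∀ u a, M u (f (.inl a)) = 0) (hrow : ∀ c v, M (f (.inr (.inr c))) v = 0) :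
    M.submatrix f f =
      blockH (M.submatrix (f ∘ .inl) (f ∘ .inr ∘ .inl))
        (M.submatrix (f ∘ .inr ∘ .inl) (f ∘ .inr ∘ .inl))
        (M.submatrix (f ∘ .inr ∘ .inl) (f ∘ .inr ∘ .inr))
        (M.submatrix (f ∘ .inl) (f ∘ .inr ∘ .inr)) := by
  ext (a | b | c) (a' | b' | c') <;> simp [blockH, hcol, hrow]

lemma blockH_right_inj {X : Matrix α β ℤ} {P : Matrix β β ℤ} {Y : Matrix β γ ℤ}
    {Z Z' : Matrix α γ ℤ} : blockH X P Y Z = blockH X P Y Z' ↔ Z = Z' := by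
  simp [blockH, fromBlocks_inj, fromCols_ext_iff]

variable [Fintype α] [Fintype β] [Fintype γ]

lemma blockH_mul_blockH (X X' : Matrix α β ℤ) (P P' : Matrix β β ℤ) (Y Y' : Matrix β γ ℤ)
    (Z Z' : Matrix α γ ℤ) :
    blockH X P Y Z * blockH X' P' Y' Z' = blockH (X * P') (P * P') (P * Y') (X * Y') := by
  simp [blockH, fromBlocks_multiply, fromCols_mul_fromBlocks]

variable [DecidableEq α] [DecidableEq β] [DecidableEq γ]

lemma blockH_pow_add_two (X : Matrix α β ℤ) (P : Matrix β β ℤ) (Y : Matrix β γ ℤ)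
    (Z : Matrix α γ ℤ) (m : ℕ) :
    blockH X P Y Z ^ (m + 2) =
      blockH (X * P ^ (m + 1)) (P ^ (m + 2)) (P ^ (m + 1) * Y) (X * P ^ m * Y) := by
  induction m with
  | zero => simp [sq, blockH_mul_blockH]
  | succ m ih =>
    rw [pow_succ, ih, blockH_mul_blockH]
    simp only [Matrix.mul_assoc, ← pow_succ]

lemma blockH_pow_eq_self_iff {X : Matrix α β ℤ} {P : Matrix β β ℤ} {Y : Matrix β γ ℤ}
    {Z : Matrix α γ ℤ} {m : ℕ} (hP : P ^ (m + 1) = 1) :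
    blockH X P Y Z ^ (m + 2) = blockH X P Y Z ↔ Z = X * P ^ m * Y := by
  rw [blockH_pow_add_two, hP, pow_succ, hP, Matrix.one_mul, Matrix.mul_one, Matrix.one_mul,
    blockH_right_inj, eq_comm]

end BlockH

namespace IsZeroOne
variable {α β : Type*} {A : Matrix α β ℤ}

lemma nonneg (h : IsZeroOne A) (i : α) (j : β) : 0 ≤ A i j := by
  rcases h i j with h | h <;> simp [h]

lemma eq_one_of_pos (h : IsZeroOne A) {i : α} {j : β} (hij : 0 < A i j) : A i j = 1 :=
  (h i j).resolve_left hij.ne'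

lemma submatrix (h : IsZeroOne A) {γ δ : Type*} (f : γ → α) (g : δ → β) :
    IsZeroOne (A.submatrix f g) :=
  fun i j => h (f i) (g j)

lemma transpose (h : IsZeroOne A) : IsZeroOne Aᵀ := fun i j => h j i

end IsZeroOne

section Nonneg
variable {ι κ ν R : Type*} [Fintype κ] [CommRing R] [LinearOrder R] [IsStrictOrderedRing R]
  {M : Matrix ι κ R} {N : Matrix κ ν R}

lemma le_mul_apply_of_nonneg (hM : ∀ i j, 0 ≤ M i j) (hN : ∀ j l, 0 ≤ N j l) (i : ι) (j : κ)
    (l : ν) : M i j * N j l ≤ (M * N) i l :=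
  Finset.single_le_sum (f := fun j => M i j * N j l) (fun j _ => mul_nonneg (hM i j) (hN j l))
    (Finset.mem_univ j)

lemma add_le_mul_apply_of_nonneg [DecidableEq κ] (hM : ∀ i j, 0 ≤ M i j)
    (hN : ∀ j l, 0 ≤ N j l) (i : ι) {j j' : κ} (hj : j ≠ j') (l : ν) :
    M i j * N j l + M i j' * N j' l ≤ (M * N) i l := by
  have h := Finset.sum_le_univ_sum_of_nonneg (s := {j, j'}) (f := fun j => M i j * N j l)
    fun j => mul_nonneg (hM i j) (hN j l)
  rwa [Finset.sum_pair hj] at h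

lemma exists_pos_of_mul_apply_pos (hM : ∀ i j, 0 ≤ M i j) {i : ι} {l : ν}
    (h : 0 < (M * N) i l) : ∃ j, 0 < M i j ∧ 0 < N j l := by
  obtain ⟨j, -, hj⟩ := Finset.exists_lt_of_sum_lt (s := Finset.univ) (f := 0)
    (g := fun j => M i j * N j l) (by simpa [mul_apply] using h)
  exact ⟨j, (pos_and_pos_or_neg_and_neg_of_mul_pos hj).resolve_right fun h => (hM i j).not_gt h.1⟩

end Nonneg

section PowEqSelf
variable {ι : Type*} [Fintype ι] [DecidableEq ι]

/-- Pick `z` with `0 < B j z` having the fewest `B`-predecessors. A predecessor `y` of `z` with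
`0 < B j y` has the same predecessors as `z`, so `0 < B y y`; and `y = j`, since otherwise
`B u y = (B * B) u y ≥ B u j * B j y + B u y * B y y > B u y`. -/
lemma IsIdempotentElem.diag_pos_of_pos_of_pos {B : Matrix ι ι ℤ} (hBB : IsIdempotentElem B)
    (hB : ∀ i j, 0 ≤ B i j) {u j w : ι} (huj : 0 < B u j) (hjw : 0 < B j w) : 0 < B j j := by
  have htrans : ∀ {x y z}, 0 < B x y → 0 < B y z → 0 < B x z := fun hxy hyz =>
    (mul_pos hxy hyz).trans_le
      ((le_mul_apply_of_nonneg hB hB _ _ _).trans_eq (congrFun₂ hBB.eq _ _))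
  let pred (z : ι) : Finset ι := {y | 0 < B y z}
  obtain ⟨z, hjz, hmin⟩ := Finset.exists_min_image {z | 0 < B j z} (fun z => (pred z).card)
    ⟨w, by simpa using hjw⟩
  obtain ⟨y, hjy, hyz⟩ := exists_pos_of_mul_apply_pos hB
    (show 0 < (B * B) j z by rw [hBB.eq]; simpa using hjz)
  have hpred : pred y = pred z := Finset.eq_of_subset_of_card_le
    (fun x hx => by simp only [pred, Finset.mem_filter_univ] at hx ⊢; exact htrans hx hyz)
    (hmin y (by simpa using hjy))
  have hyy : y ∈ pred y := hpred ▸ (by simpa [pred] using hyz)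
  simp only [pred, Finset.mem_filter_univ] at hyy
  by_contra hjj
  have hjy' : j ≠ y := by rintro rfl; exact hjj hyy
  have h := add_le_mul_apply_of_nonneg hB hB u hjy' y
  rw [hBB.eq] at h
  nlinarith [mul_pos huj hjy, hB u y]

variable {A : Matrix ι ι ℤ} {m : ℕ}

lemma isIdempotentElem_pow_succ (hA : A ^ (m + 2) = A) : IsIdempotentElem (A ^ (m + 1)) := by
  rw [IsIdempotentElem, ← pow_add, show m + 1 + (m + 1) = m + (m + 2) by ring, pow_add, hA,
    ← pow_succ]

variable (h01 : IsZeroOne A) (hA : A ^ (m + 2) = A)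
include h01 hA

lemma pow_succ_diag_pos_of_pos_of_pos {u j w : ι} (huj : 0 < A u j) (hjw : 0 < A j w) :
    0 < (A ^ (m + 1)) j j := by
  have hB := pow_apply_nonneg h01.nonneg (m + 1)
  obtain ⟨t, -, htj⟩ := exists_pos_of_mul_apply_pos h01.nonneg
    (show 0 < (A * A ^ (m + 1)) u j by rwa [← pow_succ', hA])
  obtain ⟨t', hjt', -⟩ := exists_pos_of_mul_apply_pos hB
    (show 0 < (A ^ (m + 1) * A) j w by rwa [← pow_succ, hA])
  exact (isIdempotentElem_pow_succ hA).diag_pos_of_pos_of_pos hB htj hjt'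

/-- If `x → y` starts a closed walk through `x`, then `y` reaches every out-neighbour `z` of `x`
by a walk of length `m + 1`; a second such `z` lying on a closed walk would make
`(A * A ^ (m + 1)) x z = A x z` at least `2`. -/
lemma exists_unique_pos_of_pow_succ_diag_pos {x : ι} (hx : 0 < (A ^ (m + 1)) x x) :
    ∃ y, 0 < (A ^ (m + 1)) y y ∧ 0 < A x y ∧
      ∀ z, 0 < (A ^ (m + 1)) z z → 0 < A x z → z = y := by
  have hB := pow_apply_nonneg h01.nonneg (m + 1)
  rw [pow_succ'] at hx
  obtain ⟨y, hxy, hyx⟩ := exists_pos_of_mul_apply_pos h01.nonneg hx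
  have hreach : ∀ z, 0 < A x z → 0 < (A ^ (m + 1)) y z := fun z hxz => by
    rw [pow_succ]
    exact (mul_pos hyx hxz).trans_le
      (le_mul_apply_of_nonneg (pow_apply_nonneg h01.nonneg m) h01.nonneg _ _ _)
  refine ⟨y, hreach y hxy, hxy, fun z hz hxz => by_contra fun hzy => ?_⟩
  have h := add_le_mul_apply_of_nonneg h01.nonneg hB x (Ne.symm hzy) z
  rw [← pow_succ', hA, h01.eq_one_of_pos hxy, h01.eq_one_of_pos hxz] at h
  linarith [hreach z hxz]

lemma eq_of_pos_of_pos_of_pow_succ_diag_pos {x x' y : ι} (hy : 0 < (A ^ (m + 1)) y y)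
    (hx : 0 < (A ^ (m + 1)) x x) (hx' : 0 < (A ^ (m + 1)) x' x') (hxy : 0 < A x y)
    (hx'y : 0 < A x' y) : x = x' := by
  have hdiag : ∀ z, (Aᵀ ^ (m + 1)) z z = (A ^ (m + 1)) z z := by simp [← transpose_pow]
  obtain ⟨z, -, -, huniq⟩ := exists_unique_pos_of_pow_succ_diag_pos h01.transpose
    (by rw [← transpose_pow, hA]) ((hdiag y).symm ▸ hy)
  rw [huniq x ((hdiag x).symm ▸ hx) hxy, huniq x' ((hdiag x').symm ▸ hx') hx'y]

theorem exists_perm_pow_succ_eq_one_submatrix_eq_permMatrix :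
    ∃ σ : Perm {x // 0 < (A ^ (m + 1)) x x},
      σ ^ (m + 1) = 1 ∧ A.submatrix Subtype.val Subtype.val = σ.permMatrix ℤ := by
  choose f hf using fun x : {x // 0 < (A ^ (m + 1)) x x} =>
    exists_unique_pos_of_pow_succ_diag_pos h01 hA x.2
  let g (x : {x // 0 < (A ^ (m + 1)) x x}) : {x // 0 < (A ^ (m + 1)) x x} := ⟨f x, (hf x).1⟩
  have hg : Function.Injective g := fun x x' h => Subtype.ext <|
    eq_of_pos_of_pos_of_pow_succ_diag_pos h01 hA (hf x).1 x.2 x'.2 (hf x).2.1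
      (by rw [show f x = f x' from congrArg Subtype.val h]; exact (hf x').2.1)
  let σ := Equiv.ofBijective g hg.bijective_of_finite
  have hwalk : ∀ j (x : {x // 0 < (A ^ (m + 1)) x x}), 0 < (A ^ j) x ((σ ^ j) x) := by
    intro j x
    induction j with
    | zero => simp
    | succ j ih =>
      rw [pow_succ A j, pow_succ' σ j, Perm.mul_apply]
      exact (mul_pos ih (hf _).2.1).trans_le
        (le_mul_apply_of_nonneg (pow_apply_nonneg h01.nonneg j) h01.nonneg _ _ _)
  refine ⟨σ, Perm.ext fun x => σ.injective ?_, ?_⟩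
  · have h := hwalk (m + 2) x
    rw [hA] at h
    rw [← Perm.mul_apply, ← pow_succ']
    exact Subtype.ext ((hf x).2.2 _ ((σ ^ (m + 2)) x).2 h)
  · ext x y
    simp only [submatrix_apply, PEquiv.toMatrix_apply, toPEquiv_apply, Option.mem_def,
      Option.some.injEq]
    split_ifs with hxy
    · subst hxy
      exact h01.eq_one_of_pos (hf x).2.1
    · exact (h01 x y).resolve_right fun h1 =>
        hxy (Subtype.ext ((hf x).2.2 y y.2 (h1 ▸ one_pos)).symm)

theorem exists_equiv_submatrix_eq_blockH : ∃ (r s t : ℕ) (ns : Fin t → ℕ)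
    (f : Fin r ⊕ (Σ i, Fin (ns i)) ⊕ Fin s ≃ ι), (∀ i, ns i ∣ m + 1) ∧
      A.submatrix f f =
        blockH (A.submatrix (f ∘ .inl) (f ∘ .inr ∘ .inl)) (blockDiagonal' fun i => circ (ns i))
          (A.submatrix (f ∘ .inr ∘ .inl) (f ∘ .inr ∘ .inr))
          (A.submatrix (f ∘ .inl) (f ∘ .inr ∘ .inr)) := by
  classical
  obtain ⟨σ, hσ, hAσ⟩ := exists_perm_pow_succ_eq_one_submatrix_eq_permMatrix h01 hA
  obtain ⟨t, ns, e, hns, hσe⟩ := σ.exists_permCongr_eq_sigmaCongrRight_finRotate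
  let IsSource (x : ι) : Prop := ∀ u, A u x = 0
  have hsource : ∀ x, 0 < (A ^ (m + 1)) x x → ¬IsSource x := fun x hx hsrc => by
    rw [pow_succ] at hx
    obtain ⟨u, -, hux⟩ := exists_pos_of_mul_apply_pos (pow_apply_nonneg h01.nonneg m) hx
    exact hux.ne' (hsrc u)
  let f := (Equiv.sumCongr (Fintype.equivFin _).symm
    (Equiv.sumCongr e.symm (Fintype.equivFin _).symm)).trans
    (Equiv.sumSubtypeOfDisjoint IsSource _ hsource)
  refine ⟨_, _, t, ns, f, fun i => (hns i).trans (orderOf_dvd_of_pow_eq_one hσ), ?_⟩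
  rw [submatrix_eq_blockH A f (fun u a => ((Fintype.equivFin _).symm a).2 u) fun c v => ?_]
  · rw [blockDiagonal'_circ, ← hσe, permMatrix_permCongr, ← hAσ]
    rfl
  · obtain ⟨hsrc, hrec⟩ := ((Fintype.equivFin _).symm c).2
    obtain ⟨u, hux⟩ := not_forall.mp hsrc
    by_contra hxv
    exact hrec (pow_succ_diag_pos_of_pos_of_pos h01 hA
      ((h01.nonneg _ _).lt_of_ne' hux) ((h01.nonneg _ _).lt_of_ne' hxv))

end PowEqSelf

theorem stmt7 {n k : ℕ} (hk : 2 ≤ k) (A : Matrix (Fin n) (Fin n) ℤ)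
    (h01 : IsZeroOne A) :
    A ^ k = A ↔
      A = 0 ∨
      ∃ (r s t : ℕ) (ns : Fin t → ℕ), (∀ i, ns i ∣ k - 1) ∧
        ∃ (X : Matrix (Fin r) ((i : Fin t) × Fin (ns i)) ℤ)
          (Y : Matrix ((i : Fin t) × Fin (ns i)) (Fin s) ℤ),
          IsZeroOne X ∧ IsZeroOne Y ∧
          IsZeroOne (X * (Matrix.blockDiagonal' fun i => circ (ns i))ᵀ * Y) ∧
          ∃ e : Fin n ≃ (Fin r ⊕ ((i : Fin t) × Fin (ns i)) ⊕ Fin s),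
            ∀ i j, A i j =
              blockH X (Matrix.blockDiagonal' fun i => circ (ns i)) Y
                (X * (Matrix.blockDiagonal' fun i => circ (ns i))ᵀ * Y) (e i) (e j) := by
  obtain ⟨m, rfl⟩ : ∃ m, k = m + 2 := ⟨k - 2, by omega⟩
  constructor
  · intro hA
    obtain ⟨r, s, t, ns, f, hns, hAf⟩ := exists_equiv_submatrix_eq_blockH h01 hA
    have hZ := (blockH_pow_eq_self_iff (blockDiagonal'_circ_pow_succ hns)).mp
      (by rw [← hAf, submatrix_equiv_pow, hA])
    rw [← transpose_blockDiagonal'_circ hns] at hZ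
    refine Or.inr ⟨r, s, t, ns, hns, _, _, h01.submatrix _ _, h01.submatrix _ _,
      hZ ▸ h01.submatrix _ _, f.symm, fun i j => ?_⟩
    rw [← hZ, ← hAf, submatrix_apply, f.apply_symm_apply, f.apply_symm_apply]
  · rintro (rfl | ⟨r, s, t, ns, hns, X, Y, -, -, -, e, he⟩)
    · exact zero_pow (by omega)
    · obtain rfl : A = (blockH X _ Y _).submatrix e e := Matrix.ext he
      rw [submatrix_equiv_pow, (blockH_pow_eq_self_iff (blockDiagonal'_circ_pow_succ hns)).mpr
        (by rw [transpose_blockDiagonal'_circ hns])]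
end

section
/- Let n ≥ 2 and let A be an n×n 0-1 matrix of the block form [[0_r, X],[0, P]] or [[P, X],[0, 0_r]] with P a permutation matrix of order n−r. Then the number f(A) of nonzero entries of A satisfies f(A) ≤ γ(n), where γ(n) = (n+1)²/4 if n is odd and γ(n) = (n²+2n)/4 if n is even. -/
open Matrix

/-- The number of nonzero entries of a matrix. -/
def fcount {α β : Type*} [Fintype α] [Fintype β] (A : Matrix α β ℤ) : ℕ :=
  (Finset.univ.filter fun p : α × β => A p.1 p.2 ≠ 0).card

/-- γ(n) = (n+1)²/4 if n is odd and (n²+2n)/4 if n is even. -/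
def gamma (n : ℕ) : ℕ := if Odd n then (n + 1) ^ 2 / 4 else (n ^ 2 + 2 * n) / 4

lemma fcount_le_card {α β γ : Type*} [Fintype α] [Fintype β] [Fintype γ] [DecidableEq γ]
    (A : Matrix α β ℤ) (g : α × β → γ)
    (hg : ∀ p q : α × β, A p.1 p.2 ≠ 0 → A q.1 q.2 ≠ 0 → g p = g q → p = q) :
    fcount A ≤ Fintype.card γ := by
  unfold fcount
  have := Finset.card_le_card_of_injOn g
    (s := Finset.univ.filter fun p : α × β => A p.1 p.2 ≠ 0)
    (t := Finset.univ) (fun _ _ => Finset.mem_univ _)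
    (fun p hp q hq => hg p q (by simpa using hp) (by simpa using hq))
  simpa using this

lemma fcount_zero_of_all_zero {α β : Type*} [Fintype α] [Fintype β]
    (A : Matrix α β ℤ) (h : ∀ i j, A i j = 0) : fcount A = 0 := by
  unfold fcount
  simp [Finset.filter_eq_empty_iff, h]

lemma arith {n r m : ℕ} (hrm : r + m = n) : r * m + m ≤ gamma n := by
  have hz : 4 * ((r:ℤ) * m + m) ≤ ((n:ℤ) + 1) ^ 2 := by
    have hn : (n:ℤ) = r + m := by exact_mod_cast hrm.symm
    nlinarith [sq_nonneg ((r:ℤ) + 1 - m)]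
  have h4 : 4 * (r * m + m) ≤ (n + 1) ^ 2 := by exact_mod_cast hz
  have hsq : (n + 1) ^ 2 = n ^ 2 + 2 * n + 1 := by ring
  unfold gamma
  split_ifs with h
  · exact (Nat.le_div_iff_mul_le (by norm_num)).2 (by omega)
  · obtain ⟨k, hk⟩ := Nat.not_odd_iff_even.1 h
    have hb : n ^ 2 + 2 * n = 4 * (k * k + k) := by subst hk; ring
    exact (Nat.le_div_iff_mul_le (by norm_num)).2 (by omega)

theorem stmt9 {n r m : ℕ} (hn : 2 ≤ n) (hrm : r + m = n)
    (P : Matrix (Fin m) (Fin m) ℤ) (hP : IsPermMatrix P) :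
    (∀ X : Matrix (Fin r) (Fin m) ℤ, IsZeroOne X →
      fcount (Matrix.fromBlocks (0 : Matrix (Fin r) (Fin r) ℤ) X 0 P) ≤ gamma n) ∧
    (∀ X : Matrix (Fin m) (Fin r) ℤ, IsZeroOne X →
      fcount (Matrix.fromBlocks P X 0 (0 : Matrix (Fin r) (Fin r) ℤ)) ≤ gamma n) := by
  obtain ⟨σ, hσ⟩ := hP
  have hcard : Fintype.card ((Fin r × Fin m) ⊕ Fin m) = r * m + m := by simp
  rcases Nat.eq_zero_or_pos m with hm | hm
  · -- m = 0 : both matrices are zero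
    constructor
    · intro X _
      have : fcount (Matrix.fromBlocks (0 : Matrix (Fin r) (Fin r) ℤ) X 0 P) = 0 := by
        apply fcount_zero_of_all_zero
        rintro (i | i) (j | j) <;> first | exact (Fin.elim0 (hm ▸ i)) | exact (Fin.elim0 (hm ▸ j)) | simp
      simp [this]
    · intro X _
      have : fcount (Matrix.fromBlocks P X 0 (0 : Matrix (Fin r) (Fin r) ℤ)) = 0 := by
        apply fcount_zero_of_all_zero
        rintro (i | i) (j | j) <;> first | exact (Fin.elim0 (hm ▸ i)) | exact (Fin.elim0 (hm ▸ j)) | simp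
      simp [this]
  · have j0 : Fin m := ⟨0, hm⟩
    constructor
    · intro X _
      set A := Matrix.fromBlocks (0 : Matrix (Fin r) (Fin r) ℤ) X 0 P with hA
      have key : fcount A ≤ r * m + m := by
        rw [← hcard]
        apply fcount_le_card A (fun p =>
          match p with
          | (Sum.inl a, Sum.inr b) => Sum.inl (a, b)
          | (Sum.inr i, _) => Sum.inr i
          | (Sum.inl _, Sum.inl _) => Sum.inr j0)
        rintro ⟨(a | i), (b | j)⟩ ⟨(a' | i'), (b' | j')⟩ hp hq hgpq <;>
          simp_all [hA, Matrix.fromBlocks, hσ]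
      exact key.trans (arith hrm)
    · intro X _
      set A := Matrix.fromBlocks P X 0 (0 : Matrix (Fin r) (Fin r) ℤ) with hA
      have key : fcount A ≤ r * m + m := by
        have hcard' : Fintype.card ((Fin m × Fin r) ⊕ Fin m) = r * m + m := by
          simp [Nat.mul_comm]
        rw [← hcard']
        apply fcount_le_card A (fun p =>
          match p with
          | (Sum.inl i, Sum.inr b) => Sum.inl (i, b)
          | (Sum.inl i, Sum.inl _) => Sum.inr i
          | (Sum.inr _, _) => Sum.inr j0)
        rintro ⟨(a | i), (b | j)⟩ ⟨(a' | i'), (b' | j')⟩ hp hq hgpq <;>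
          simp_all [hA, Matrix.fromBlocks, hσ]
      exact key.trans (arith hrm)
end

section
/- Let n ≥ 2 and let A be an n×n 0-1 matrix of block form [[0_r, X],[0, P]] with P a permutation matrix of order n−r. Then f(A) = γ(n) if and only if X has all entries equal to 1, and r = (n−1)/2 when n is odd, while r ∈ {n/2, n/2 − 1} when n is even. -/
open Matrix

/-!
The nonzero entries of `fromBlocks 0 X 0 P` are those of `X`, at most `r * m`, and the `m` ones
of `P`, so `f(A) ≤ (r + 1) * m`. Since `4 (r + 1) m = (n + 1)² - (r + 1 - m)²` and `r + 1 - m`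
has the parity of `n + 1`, this is at most `γ(n)`, with equality exactly when `r + 1 - m = 0`
for odd `n` and `r + 1 - m = ±1` for even `n`.
-/

section fcount

variable {α β γ δ : Type*} [Fintype α] [Fintype β] [Fintype γ] [Fintype δ]

theorem fcount_eq_sum (A : Matrix α β ℤ) :
    fcount A = ∑ i, ∑ j, if A i j ≠ 0 then 1 else 0 := by
  rw [fcount, Finset.card_filter, Fintype.sum_prod_type]

@[simp]
theorem fcount_zero : fcount (0 : Matrix α β ℤ) = 0 := by
  simp [fcount]

theorem fcount_fromBlocks (A : Matrix α γ ℤ) (B : Matrix α δ ℤ) (C : Matrix β γ ℤ)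
    (D : Matrix β δ ℤ) :
    fcount (fromBlocks A B C D) = fcount A + fcount B + (fcount C + fcount D) := by
  simp only [fcount_eq_sum, Fintype.sum_sum_type, fromBlocks_apply₁₁, fromBlocks_apply₁₂,
    fromBlocks_apply₂₁, fromBlocks_apply₂₂, Finset.sum_add_distrib]
  rw [add_add_add_comm]
  -- the two sides differ only in their `Decidable` instances
  congr

theorem fcount_le_card_mul_card (A : Matrix α β ℤ) :
    fcount A ≤ Fintype.card α * Fintype.card β :=
  (Finset.card_filter_le _ _).trans_eq (by simp)

theorem fcount_eq_card_mul_card_iff (A : Matrix α β ℤ) :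
    fcount A = Fintype.card α * Fintype.card β ↔ ∀ i j, A i j ≠ 0 := by
  rw [fcount, ← Fintype.card_prod, ← Finset.card_univ, Finset.card_filter_eq_iff]
  simp

theorem fcount_of_isPermMatrix [DecidableEq α] {P : Matrix α α ℤ} (hP : IsPermMatrix P) :
    fcount P = Fintype.card α := by
  obtain ⟨σ, hσ⟩ := hP
  simp [fcount_eq_sum, hσ]

end fcount

theorem IsZeroOne.ne_zero_iff {α β : Type*} {A : Matrix α β ℤ} (hA : IsZeroOne A) (i : α)
    (j : β) :
    A i j ≠ 0 ↔ A i j = 1 := by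
  rcases hA i j with h | h <;> simp [h]

theorem gamma_two_mul (k : ℕ) : gamma (2 * k) = k * (k + 1) := by
  rw [gamma, if_neg (by simp), show (2 * k) ^ 2 + 2 * (2 * k) = 4 * (k * (k + 1)) by ring,
    Nat.mul_div_cancel_left _ four_pos]

theorem gamma_two_mul_add_one (k : ℕ) : gamma (2 * k + 1) = (k + 1) ^ 2 := by
  rw [gamma, if_pos (odd_two_mul_add_one k), show (2 * k + 1 + 1) ^ 2 = 4 * (k + 1) ^ 2 by ring,
    Nat.mul_div_cancel_left _ four_pos]

theorem succ_mul_le_gamma {r m n : ℕ} (h : r + m = n) : (r + 1) * m ≤ gamma n := by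
  obtain ⟨k, rfl | rfl⟩ := Nat.even_or_odd' n
  · rw [gamma_two_mul]
    nlinarith [sq_nonneg ((r : ℤ) + 1 - m)]
  · rw [gamma_two_mul_add_one]
    nlinarith [sq_nonneg ((r : ℤ) + 1 - m)]

theorem succ_mul_eq_gamma_iff {r m n : ℕ} (h : r + m = n) :
    (r + 1) * m = gamma n ↔
      (Odd n → r = (n - 1) / 2) ∧ (Even n → r = n / 2 ∨ r = n / 2 - 1) := by
  have key : 4 * (((r : ℤ) + 1) * m) + ((r : ℤ) + 1 - m) ^ 2 = ((n : ℤ) + 1) ^ 2 := by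
    rw [← h]; push_cast; ring
  obtain ⟨k, rfl | rfl⟩ := Nat.even_or_odd' n
  · have hsq : (r + 1) * m = gamma (2 * k) ↔ ((r : ℤ) + 1 - m) ^ 2 = 1 := by
      rw [gamma_two_mul]
      zify at key ⊢
      constructor <;> intro <;> linarith
    rw [hsq, sq_eq_one_iff]
    simp only [Nat.not_odd_iff_even.mpr (even_two_mul k), even_two_mul, true_implies,
      false_implies, true_and]
    omega
  · have hsq : (r + 1) * m = gamma (2 * k + 1) ↔ ((r : ℤ) + 1 - m) ^ 2 = 0 := by
      rw [gamma_two_mul_add_one]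
      zify at key ⊢
      constructor <;> intro <;> linarith
    rw [hsq, sq_eq_zero_iff]
    simp only [odd_two_mul_add_one, Nat.not_even_iff_odd.mpr (odd_two_mul_add_one k),
      true_implies, false_implies, and_true]
    omega

theorem stmt10_general {n r m : ℕ} (hrm : r + m = n)
    (P : Matrix (Fin m) (Fin m) ℤ) (hP : IsPermMatrix P)
    (X : Matrix (Fin r) (Fin m) ℤ) (hX : IsZeroOne X) :
    fcount (Matrix.fromBlocks (0 : Matrix (Fin r) (Fin r) ℤ) X 0 P) = gamma n ↔
      (∀ i j, X i j = 1) ∧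
      (Odd n → r = (n - 1) / 2) ∧
      (Even n → r = n / 2 ∨ r = n / 2 - 1) := by
  have hX_le : fcount X ≤ r * m := by simpa using fcount_le_card_mul_card X
  have hX_full : fcount X = r * m ↔ ∀ i j, X i j = 1 := by
    simpa [hX.ne_zero_iff] using fcount_eq_card_mul_card_iff X
  have h_le := succ_mul_le_gamma hrm
  rw [fcount_fromBlocks, fcount_zero, fcount_zero, fcount_of_isPermMatrix hP, Fintype.card_fin,
    ← hX_full, ← succ_mul_eq_gamma_iff hrm]
  rw [add_one_mul] at h_le ⊢
  omega

theorem stmt10 {n r m : ℕ} (hn : 2 ≤ n) (hrm : r + m = n)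
    (P : Matrix (Fin m) (Fin m) ℤ) (hP : IsPermMatrix P)
    (X : Matrix (Fin r) (Fin m) ℤ) (hX : IsZeroOne X) :
    fcount (Matrix.fromBlocks (0 : Matrix (Fin r) (Fin r) ℤ) X 0 P) = gamma n ↔
      (∀ i j, X i j = 1) ∧
      (Odd n → r = (n - 1) / 2) ∧
      (Even n → r = n / 2 ∨ r = n / 2 - 1) :=
  stmt10_general hrm P hP X hX
end

section
/- Let k ≥ 2 and let A be an n×n 0-1 matrix with A^k = A. Suppose D(A) contains two disjoint directed cycles C and C' whose lengths both divide k−1. Then D(A) contains no directed path from any vertex of C to any vertex of C'. -/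
/-!
Let `K = k - 1` and let `P` be a path of length `ℓ ≥ 1` from `C` to `C'`. Since `A ^ k = A`, also
`A ^ (K + ℓ) = A ^ ℓ`, so the `(K + ℓ)`-walks from the start `i` of `P` to its end `j` are exactly
as many as the `ℓ`-walks. Every `ℓ`-walk from `i` to `j` gives a `(K + ℓ)`-walk that first winds
around `C` (whose length divides `K`) and then follows it. But following `P` and then winding
around `C'` gives one more `(K + ℓ)`-walk, whose vertex at time `K` is not `i`: it lies on `P`
beyond `i` when `K ≤ ℓ`, and on `C'` otherwise.
-/

open Matrix

open Fin.NatCast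

theorem pow_sub_one_add_of_pow_eq_self {M : Type*} [Monoid M] {a : M} {k ℓ : ℕ} (h : a ^ k = a)
    (hℓ : 1 ≤ ℓ) : a ^ (k - 1 + ℓ) = a ^ ℓ := by
  obtain _ | k := k
  · simp
  obtain ⟨ℓ, rfl⟩ := Nat.exists_eq_add_of_le' hℓ
  rw [Nat.add_sub_cancel, show k + (ℓ + 1) = k + 1 + ℓ by omega, pow_add, h, ← pow_succ']

namespace Matrix

variable {R ι : Type*} [Semiring R] [PartialOrder R] [Fintype ι] [DecidableEq ι]

section OrderedRing

variable [IsOrderedRing R] {A : Matrix ι ι R}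

theorem one_le_pow_add_apply (hA : ∀ i j, 0 ≤ A i j) {m m' : ℕ} {i j l : ι}
    (h₁ : 1 ≤ (A ^ m) i j) (h₂ : 1 ≤ (A ^ m') j l) : 1 ≤ (A ^ (m + m')) i l := by
  rw [pow_add, mul_apply]
  calc 1 ≤ (A ^ m) i j * (A ^ m') j l := one_le_mul_of_one_le_of_one_le h₁ h₂
    _ ≤ ∑ x, (A ^ m) i x * (A ^ m') x l :=
      Finset.single_le_sum (fun x _ => mul_nonneg (pow_apply_nonneg hA m i x)
        (pow_apply_nonneg hA m' x l)) (Finset.mem_univ j)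

theorem one_le_pow_apply_of_path (hA : ∀ i j, 0 ≤ A i j) {ℓ : ℕ} {w : Fin (ℓ + 1) → ι}
    (hw : ∀ i : Fin ℓ, 1 ≤ A (w i.castSucc) (w i.succ)) {s t : Fin (ℓ + 1)} (hst : s ≤ t) :
    1 ≤ (A ^ (t - s : ℕ)) (w s) (w t) := by
  obtain ⟨t, ht⟩ := t
  induction t with
  | zero => simp [nonpos_iff_eq_zero.mp hst]
  | succ t ih =>
    obtain hlt | rfl := hst.lt_or_eq
    · have hlt : (s : ℕ) < t + 1 := hlt
      have hpre := ih (by omega) (Fin.le_iff_val_le_val.mpr (by simp only; omega))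
      have hstep : 1 ≤ (A ^ 1) (w ⟨t, by omega⟩) (w ⟨t + 1, ht⟩) := by
        rw [pow_one]; exact hw ⟨t, by omega⟩
      rw [show t + 1 - s = t - s + 1 by omega]
      exact one_le_pow_add_apply hA hpre hstep
    · simp

theorem one_le_pow_apply_of_cycle (hA : ∀ i j, 0 ≤ A i j) {p : ℕ} [NeZero p] {c : Fin p → ι}
    (hc : ∀ i, 1 ≤ A (c i) (c (i + 1))) (i : Fin p) (m : ℕ) :
    1 ≤ (A ^ m) (c i) (c (i + m)) := by
  induction m with
  | zero => simp
  | succ m ih =>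
    rw [Nat.cast_succ, ← add_assoc]
    exact one_le_pow_add_apply hA ih (by rw [pow_one]; exact hc _)

theorem one_le_pow_apply_self_of_cycle (hA : ∀ i j, 0 ≤ A i j) {p : ℕ} [NeZero p]
    {c : Fin p → ι} (hc : ∀ i, 1 ≤ A (c i) (c (i + 1))) (i : Fin p) {m : ℕ} (hm : p ∣ m) :
    1 ≤ (A ^ m) (c i) (c i) := by
  simpa [Fin.natCast_eq_zero.mpr hm] using one_le_pow_apply_of_cycle hA hc i m

/-- The witness is the vertex reached after `K` steps along `w` followed by rounds of `c`. -/
theorem exists_ne_one_le_pow_apply_of_path_of_cycle (hA : ∀ i j, 0 ≤ A i j) {ℓ q K : ℕ} [NeZero q]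
    {w : Fin (ℓ + 1) → ι} (hw : ∀ i : Fin ℓ, 1 ≤ A (w i.castSucc) (w i.succ))
    (hw_inj : Function.Injective w) {c : Fin q → ι} (hc : ∀ i, 1 ≤ A (c i) (c (i + 1))) {b : Fin q}
    (hb : w (Fin.last ℓ) = c b) (hstart : w 0 ∉ Set.range c) (hK : 1 ≤ K) (hq : q ∣ K) :
    ∃ x ≠ w 0, 1 ≤ (A ^ K) (w 0) x ∧ 1 ≤ (A ^ ℓ) x (c b) := by
  rcases le_or_gt K ℓ with hKℓ | hℓK
  · have hK0 (h : w ⟨K, by omega⟩ = w 0) : K = 0 := by simpa using congrArg Fin.val (hw_inj h)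
    refine ⟨w ⟨K, by omega⟩, fun h => absurd (hK0 h) (by omega), ?_, ?_⟩
    · simpa using one_le_pow_apply_of_path hA hw (Fin.zero_le (⟨K, by omega⟩ : Fin (ℓ + 1)))
    · have hsuffix := one_le_pow_apply_of_path hA hw (Fin.le_last (⟨K, by omega⟩ : Fin (ℓ + 1)))
      rw [hb] at hsuffix
      simpa [Nat.sub_add_cancel hKℓ] using
        one_le_pow_add_apply hA hsuffix (one_le_pow_apply_self_of_cycle hA hc b hq)
  · refine ⟨c (b + (K - ℓ : ℕ)), fun h => hstart ⟨_, h⟩, ?_, ?_⟩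
    · have hpath := one_le_pow_apply_of_path hA hw (Fin.zero_le (Fin.last ℓ))
      simp only [Fin.val_last, Fin.val_zero, Nat.sub_zero, hb] at hpath
      simpa [Nat.add_sub_cancel' hℓK.le] using
        one_le_pow_add_apply hA hpath (one_le_pow_apply_of_cycle hA hc b (K - ℓ))
    · have hround := one_le_pow_apply_of_cycle hA hc (b + (K - ℓ : ℕ)) ℓ
      rwa [add_assoc, ← Nat.cast_add, Nat.sub_add_cancel hℓK.le, Fin.natCast_eq_zero.mpr hq,
        add_zero] at hround

end OrderedRing

/-- In walk terms: prefixing a closed `K`-walk at `i` already turns every `ℓ`-walk from `i` to `j`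
into a `(K + ℓ)`-walk, so when there are equally many of both, none is elsewhere at time `K`. -/
theorem eq_of_one_le_pow_apply [IsStrictOrderedRing R] {A : Matrix ι ι R}
    (hA : ∀ i j, 0 ≤ A i j) {K ℓ : ℕ} (hper : A ^ (K + ℓ) = A ^ ℓ) {i j x : ι}
    (hii : 1 ≤ (A ^ K) i i) (hix : 1 ≤ (A ^ K) i x) (hxj : 1 ≤ (A ^ ℓ) x j) : x = i := by
  by_contra hne
  have hsum : (A ^ K) i i * (A ^ ℓ) i j + (A ^ K) i x * (A ^ ℓ) x j ≤ (A ^ ℓ) i j := by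
    have h := Finset.add_le_sum (fun y _ => mul_nonneg (pow_apply_nonneg hA K i y)
      (pow_apply_nonneg hA ℓ y j)) (Finset.mem_univ i) (Finset.mem_univ x) (Ne.symm hne)
    rwa [← mul_apply, ← pow_add, hper] at h
  have hround : (A ^ ℓ) i j ≤ (A ^ K) i i * (A ^ ℓ) i j :=
    le_mul_of_one_le_left (pow_apply_nonneg hA ℓ i j) hii
  have hextra : 1 ≤ (A ^ K) i x * (A ^ ℓ) x j := one_le_mul_of_one_le_of_one_le hix hxj
  exact (lt_add_one _).not_ge ((add_le_add hround hextra).trans hsum)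

end Matrix

theorem stmt15_general {n k p q : ℕ} [NeZero p] [NeZero q] (hk : 2 ≤ k)
    (A : Matrix (Fin n) (Fin n) ℤ) (h01 : IsZeroOne A) (hA : A ^ k = A)
    (hp : p ∣ k - 1) (hq : q ∣ k - 1)
    (c : Fin p → Fin n) (c' : Fin q → Fin n)
    (hdisj : Disjoint (Set.range c) (Set.range c'))
    -- the subdigraph induced on the vertices of each cycle is exactly the cycle
    (hCind : ∀ i j : Fin p, A (c i) (c j) = 1 ↔ j = i + 1)
    (hC'ind : ∀ i j : Fin q, A (c' i) (c' j) = 1 ↔ j = i + 1) :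
    ¬ ∃ (ℓ : ℕ) (w : Fin (ℓ + 1) → Fin n),
        Function.Injective w ∧
        w 0 ∈ Set.range c ∧ w (Fin.last ℓ) ∈ Set.range c' ∧
        ∀ i : Fin ℓ, A (w i.castSucc) (w i.succ) = 1 := by
  rintro ⟨ℓ, w, hw, ⟨a, ha⟩, ⟨b, hb⟩, hwalk⟩
  have hA0 : ∀ i j, 0 ≤ A i j := fun i j => by rcases h01 i j with h | h <;> simp [h]
  have hC : ∀ i, 1 ≤ A (c i) (c (i + 1)) := fun i => ((hCind i _).mpr rfl).ge
  have hC' : ∀ i, 1 ≤ A (c' i) (c' (i + 1)) := fun i => ((hC'ind i _).mpr rfl).ge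
  have hstart : w 0 ∉ Set.range c' := fun h => hdisj.ne_of_mem ⟨a, ha⟩ h rfl
  obtain rfl | hℓ := Nat.eq_zero_or_pos ℓ
  · exact hstart ⟨b, hb⟩
  obtain ⟨x, hx, hix, hxj⟩ := exists_ne_one_le_pow_apply_of_path_of_cycle hA0
    (fun i => (hwalk i).ge) hw hC' hb.symm hstart (K := k - 1) (by omega) hq
  have hround : 1 ≤ (A ^ (k - 1)) (w 0) (w 0) := ha ▸ one_le_pow_apply_self_of_cycle hA0 hC a hp
  exact hx (eq_of_one_le_pow_apply hA0 (pow_sub_one_add_of_pow_eq_self hA hℓ) hround hix hxj)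

theorem stmt15 {n k p q : ℕ} [NeZero p] [NeZero q] (hk : 2 ≤ k)
    (A : Matrix (Fin n) (Fin n) ℤ) (h01 : IsZeroOne A) (hA : A ^ k = A)
    (hp : p ∣ k - 1) (hq : q ∣ k - 1)
    (c : Fin p → Fin n) (c' : Fin q → Fin n)
    (hc : Function.Injective c) (hc' : Function.Injective c')
    (hdisj : Disjoint (Set.range c) (Set.range c'))
    -- the subdigraph induced on the vertices of each cycle is exactly the cycle
    (hCind : ∀ i j : Fin p, A (c i) (c j) = 1 ↔ j = i + 1)
    (hC'ind : ∀ i j : Fin q, A (c' i) (c' j) = 1 ↔ j = i + 1) :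
    ¬ ∃ (ℓ : ℕ) (w : Fin (ℓ + 1) → Fin n),
        Function.Injective w ∧
        w 0 ∈ Set.range c ∧ w (Fin.last ℓ) ∈ Set.range c' ∧
        ∀ i : Fin ℓ, A (w i.castSucc) (w i.succ) = 1 :=
  stmt15_general hk A h01 hA hp hq c c' hdisj hCind hC'ind
end

section
/- For every odd n ≥ 1 and every k ≥ 2, there exists an n×n 0-1 matrix A with A^k = A and exactly (n+1)²/4 nonzero entries, namely A = [[0_r, J_{r,1}, J_{r,r}],[0, 1, J_{1,r}],[0, 0, 0_r]] with r = (n−1)/2, where the middle block is the 1×1 identity. -/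
open Matrix

def eFn {r : ℕ} (i : Fin r ⊕ Fin 1 ⊕ Fin r) : ℤ :=
  Sum.elim (fun _ => 1) (Sum.elim (fun _ => 1) (fun _ => 0)) i

def fFn {r : ℕ} (j : Fin r ⊕ Fin 1 ⊕ Fin r) : ℤ :=
  Sum.elim (fun _ => 0) (fun _ => 1) j

def Amat (r : ℕ) : Matrix (Fin r ⊕ Fin 1 ⊕ Fin r) (Fin r ⊕ Fin 1 ⊕ Fin r) ℤ :=
  Matrix.of fun i j => eFn i * fFn j

lemma blockH_eq {r : ℕ} :
    blockH (Matrix.of fun (_ : Fin r) (_ : Fin 1) => (1 : ℤ))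
        (1 : Matrix (Fin 1) (Fin 1) ℤ)
        (Matrix.of fun (_ : Fin 1) (_ : Fin r) => (1 : ℤ))
        (Matrix.of fun (_ : Fin r) (_ : Fin r) => (1 : ℤ)) = Amat r := by
  ext i j
  rcases i with i | i | i <;> rcases j with j | j | j <;>
    simp [blockH, Matrix.fromBlocks, Matrix.fromCols, Matrix.one_apply, Amat, eFn, fFn,
      Fin.fin_one_eq_zero]

lemma Amul {r : ℕ} : Amat r * Amat r = Amat r := by
  ext i j
  simp only [Amat, Matrix.mul_apply, Matrix.of_apply]
  rw [Fintype.sum_sum_type, Fintype.sum_sum_type]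
  simp [eFn, fFn]

lemma Apow {r : ℕ} : ∀ k, 1 ≤ k → Amat r ^ k = Amat r
  | 1, _ => pow_one _
  | (k+2), _ => by
      rw [pow_succ, Apow (k+1) (by omega), Amul]

/-- For odd n = 2r+1 and k ≥ 2, the matrix A = [[0_r, J_{r,1}, J_{r,r}],[0, 1, J_{1,r}],
[0, 0, 0_r]] is a 0-1 matrix with A^k = A and exactly (n+1)²/4 nonzero entries. -/
theorem stmt19 {n r k : ℕ} (hodd : Odd n) (hr : n = 2 * r + 1) (hk : 2 ≤ k) :
    IsZeroOne (blockH (Matrix.of fun (_ : Fin r) (_ : Fin 1) => (1 : ℤ))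
        (1 : Matrix (Fin 1) (Fin 1) ℤ)
        (Matrix.of fun (_ : Fin 1) (_ : Fin r) => (1 : ℤ))
        (Matrix.of fun (_ : Fin r) (_ : Fin r) => (1 : ℤ))) ∧
    (blockH (Matrix.of fun (_ : Fin r) (_ : Fin 1) => (1 : ℤ))
        (1 : Matrix (Fin 1) (Fin 1) ℤ)
        (Matrix.of fun (_ : Fin 1) (_ : Fin r) => (1 : ℤ))
        (Matrix.of fun (_ : Fin r) (_ : Fin r) => (1 : ℤ))) ^ k =
      (blockH (Matrix.of fun (_ : Fin r) (_ : Fin 1) => (1 : ℤ))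
        (1 : Matrix (Fin 1) (Fin 1) ℤ)
        (Matrix.of fun (_ : Fin 1) (_ : Fin r) => (1 : ℤ))
        (Matrix.of fun (_ : Fin r) (_ : Fin r) => (1 : ℤ))) ∧
    fcount (blockH (Matrix.of fun (_ : Fin r) (_ : Fin 1) => (1 : ℤ))
        (1 : Matrix (Fin 1) (Fin 1) ℤ)
        (Matrix.of fun (_ : Fin 1) (_ : Fin r) => (1 : ℤ))
        (Matrix.of fun (_ : Fin r) (_ : Fin r) => (1 : ℤ))) = (n + 1) ^ 2 / 4 := by
  rw [blockH_eq]
  refine ⟨?_, Apow k (by omega), ?_⟩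
  · intro i j
    rcases i with i | i | i <;> rcases j with j | j | j <;> simp [Amat, eFn, fFn]
  · have key : fcount (Amat r) = (r + 1) * (r + 1) := by
      rw [fcount]
      have hset : (Finset.univ.filter fun p : _ × _ =>
          Amat r p.1 p.2 ≠ 0) =
          (Finset.univ.filter fun i => eFn (r := r) i ≠ 0) ×ˢ
          (Finset.univ.filter fun j => fFn (r := r) j ≠ 0) := by
        ext p
        simp [Amat, mul_ne_zero_iff]
      rw [hset, Finset.card_product]
      have h1 : (Finset.univ.filter fun i => eFn (r := r) i ≠ 0).card = r + 1 := by
        rw [Finset.card_filter, Fintype.sum_sum_type, Fintype.sum_sum_type]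
        simp [eFn]
      have h2 : (Finset.univ.filter fun j => fFn (r := r) j ≠ 0).card = r + 1 := by
        rw [Finset.card_filter, Fintype.sum_sum_type, Fintype.sum_sum_type]
        simp [fFn]
        omega
      rw [h1, h2]
    rw [key, hr]
    have : (2 * r + 1 + 1) ^ 2 = ((r + 1) * (r + 1)) * 4 := by ring
    rw [this, Nat.mul_div_cancel _ (by norm_num)]
end
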